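/- arXiv:2503.01161 — 11 statements merged into one kernel-verified Lean document; each statement's English description precedes it below -/
import Mathlib

section
/- Let 𝒳 be a nonempty finite set and S : 𝒳 × 𝒳 → ℝ a column-stochastic matrix, i.e. S_{ji} ≥ 0 for all i, j ∈ 𝒳 and Σ_{j∈𝒳} S_{ji} = 1 for every i. Let π, μ : 𝒳 → ℝ be probability mass functions with π(x) > 0 and μ(x) > 0 for all x, and suppose (Sπ)(j) := Σ_{i∈𝒳} S_{ji} π(i) > 0 and (Sμ)(j) > 0 for all j. Then KL(Sπ‖Sμ) ≤ KL(π‖μ); that is, applying one step of a Markov kernel (such as a Metropolis–Hastings step) simultaneously to two distributions does not increase their Kullback–Leibler divergence. -/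
open Finset

/-- Kullback–Leibler divergence `KL(μ‖π) = Σ_x μ(x) log(μ(x)/π(x))` on a finite set. -/
noncomputable def KLdiv {X : Type*} [Fintype X] (μ π : X → ℝ) : ℝ :=
  ∑ x, μ x * Real.log (μ x / π x)

/-- Relative Fisher information
`FI_Q(μ‖π) = Σ_{i,j} π(i) Q_{ji} (f(j) − f(i) − f(i) log(f(j)/f(i)))`, `f = μ/π`. -/
noncomputable def relFI {X : Type*} [Fintype X] (Q : X → X → ℝ) (μ π : X → ℝ) : ℝ :=
  ∑ i, ∑ j, π i * Q j i *
    (μ j / π j - μ i / π i - μ i / π i * Real.log ((μ j / π j) / (μ i / π i)))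

/-- `H_Q(π, φ) = Σ_{i,j} π(i) Q_{ji} (e^{φ(j)−φ(i)} − (φ(j) − φ(i)))`. -/
noncomputable def Hq {X : Type*} [Fintype X] (Q : X → X → ℝ) (π φ : X → ℝ) : ℝ :=
  ∑ i, ∑ j, π i * Q j i * (Real.exp (φ j - φ i) - (φ j - φ i))

/-- A rate matrix: nonnegative off-diagonal entries `Q_{ji}` (jump rate from `i` to `j`)
and zero column sums. -/
def IsRateMatrix {X : Type*} [Fintype X] (Q : X → X → ℝ) : Prop :=
  (∀ i j : X, j ≠ i → 0 ≤ Q j i) ∧ ∀ i : X, ∑ j, Q j i = 0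

/-! Each output coordinate `(Sπ)(j) log((Sπ)(j)/(Sμ)(j))` is bounded, by the log-sum inequality,
by the `S`-weighted sum `Σᵢ S_{ji} π(i) log(π(i)/μ(i))`; summing over `j` and using that the
columns of `S` sum to one gives `KL(π‖μ)`. The log-sum inequality itself is the sum of the
pointwise Gibbs bounds `a log(a/b) ≥ a log c + a - b c` taken at `c = Σa / Σb`. -/

lemma mul_log_add_sub_le_mul_log_div {a b c : ℝ} (ha : 0 ≤ a) (hb : 0 ≤ b)
    (hab : b = 0 → a = 0) (hc : 0 < c) :
    a * Real.log c + a - b * c ≤ a * Real.log (a / b) := by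
  rcases ha.eq_or_lt with rfl | ha
  · simpa using mul_nonneg hb hc.le
  have hb : 0 < b := hb.lt_of_ne' fun h => ha.ne' (hab h)
  have hgibbs := Real.one_sub_inv_le_log_of_pos (div_pos (div_pos ha hb) hc)
  rw [Real.log_div (div_pos ha hb).ne' hc.ne', inv_div] at hgibbs
  have hscaled := mul_le_mul_of_nonneg_left hgibbs ha.le
  rw [show a * (1 - c / (a / b)) = a - b * c by field_simp, mul_sub] at hscaled
  linarith

/-- The log-sum inequality. -/
theorem sum_mul_log_div_sum_le {ι : Type*} (t : Finset ι) {a b : ι → ℝ}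
    (ha : ∀ i ∈ t, 0 ≤ a i) (hb : ∀ i ∈ t, 0 ≤ b i) (hab : ∀ i ∈ t, b i = 0 → a i = 0) :
    (∑ i ∈ t, a i) * Real.log ((∑ i ∈ t, a i) / ∑ i ∈ t, b i) ≤
      ∑ i ∈ t, a i * Real.log (a i / b i) := by
  rcases (sum_nonneg ha).eq_or_lt with hA | hA
  · have ha0 := (sum_eq_zero_iff_of_nonneg ha).1 hA.symm
    rw [← hA, zero_mul, sum_eq_zero fun i hi => by rw [ha0 i hi, zero_mul]]
  have hB : 0 < ∑ i ∈ t, b i := (sum_nonneg hb).lt_of_ne' fun hB => hA.ne' <|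
    sum_eq_zero fun i hi => hab i hi ((sum_eq_zero_iff_of_nonneg hb).1 hB i hi)
  set c := (∑ i ∈ t, a i) / ∑ i ∈ t, b i with hc
  calc (∑ i ∈ t, a i) * Real.log c = ∑ i ∈ t, (a i * Real.log c + a i - b i * c) := by
        rw [sum_sub_distrib, sum_add_distrib, ← sum_mul, ← sum_mul, hc,
          mul_div_cancel₀ _ hB.ne']
        ring
    _ ≤ ∑ i ∈ t, a i * Real.log (a i / b i) := sum_le_sum fun i hi =>
        mul_log_add_sub_le_mul_log_div (ha i hi) (hb i hi) (hab i hi) (div_pos hA hB)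

theorem sum_mul_mul_log_div_sum_le {ι : Type*} (t : Finset ι) {w p q : ι → ℝ}
    (hw : ∀ i ∈ t, 0 ≤ w i) (hp : ∀ i ∈ t, 0 ≤ p i) (hq : ∀ i ∈ t, 0 < q i) :
    (∑ i ∈ t, w i * p i) * Real.log ((∑ i ∈ t, w i * p i) / ∑ i ∈ t, w i * q i) ≤
      ∑ i ∈ t, w i * (p i * Real.log (p i / q i)) := by
  refine (sum_mul_log_div_sum_le t (fun i hi => mul_nonneg (hw i hi) (hp i hi))
    (fun i hi => mul_nonneg (hw i hi) (hq i hi).le) fun i hi h => ?_).trans_eq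
    (sum_congr rfl fun i hi => ?_)
  · rw [(mul_eq_zero.1 h).resolve_right (hq i hi).ne', zero_mul]
  · rcases (hw i hi).eq_or_lt with h | h
    · simp [← h]
    · rw [mul_div_mul_left _ _ h.ne', mul_assoc]

theorem stmt_2_general {X : Type*} [Fintype X]
    (S : X → X → ℝ)
    (hS0 : ∀ i j : X, 0 ≤ S j i) (hS1 : ∀ i : X, ∑ j, S j i = 1)
    (π μ : X → ℝ)
    (hπpos : ∀ x, 0 < π x) (hμpos : ∀ x, 0 < μ x) :
    KLdiv (fun j => ∑ i, S j i * π i) (fun j => ∑ i, S j i * μ i) ≤ KLdiv π μ := by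
  calc KLdiv (fun j => ∑ i, S j i * π i) (fun j => ∑ i, S j i * μ i)
      ≤ ∑ j, ∑ i, S j i * (π i * Real.log (π i / μ i)) := sum_le_sum fun j _ =>
        sum_mul_mul_log_div_sum_le univ (fun i _ => hS0 i j) (fun i _ => (hπpos i).le)
          fun i _ => hμpos i
    _ = KLdiv π μ := by
        rw [sum_comm]
        simp only [← sum_mul, hS1, one_mul]
        rfl

/-- Data processing inequality for KL divergence under a column-stochastic Markov kernel
(e.g. a Metropolis–Hastings step): `KL(Sπ‖Sμ) ≤ KL(π‖μ)`. -/
theorem stmt_2 {X : Type*} [Fintype X] [Nonempty X]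
    (S : X → X → ℝ)
    (hS0 : ∀ i j : X, 0 ≤ S j i) (hS1 : ∀ i : X, ∑ j, S j i = 1)
    (π μ : X → ℝ)
    (hπpos : ∀ x, 0 < π x) (hμpos : ∀ x, 0 < μ x)
    (hπsum : ∑ x, π x = 1) (hμsum : ∑ x, μ x = 1)
    (hSπ : ∀ j, 0 < ∑ i, S j i * π i) (hSμ : ∀ j, 0 < ∑ i, S j i * μ i) :
    KLdiv (fun j => ∑ i, S j i * π i) (fun j => ∑ i, S j i * μ i) ≤ KLdiv π μ :=
  stmt_2_general S hS0 hS1 π μ hπpos hμpos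
end

section
/- Let 𝒳 be a nonempty finite set, B > 0, c ∈ (0,1), and let Q, Q̃ be rate matrices on 𝒳. Let π, μ : ℝ → (𝒳 → ℝ) be families of positive probability mass functions such that at a time t the componentwise derivatives satisfy ∂_t π_t = Q π_t and ∂_t μ_t = Q̃ μ_t, and ‖log(π_t/μ_t)‖_∞ ≤ B. Assume that H_{Q̃}(π_t, λ·log(π_t/μ_t)) ≤ (λ²/c)·H_{Q̃}(π_t, log(π_t/μ_t)) for every λ ∈ (0,1). Then for every real Λ such that Σ_{j∈𝒳} φ(j)·(Qπ_t)(j) − Σ_{i,j∈𝒳} π_t(i) Q̃_{ji} e^{φ(j)−φ(i)} ≤ Λ for all φ : 𝒳 → ℝ (i.e. Λ upper-bounds the Lagrangian L_{Q̃}(π_t, Qπ_t)), the function s ↦ KL(π_s‖μ_s) has derivative at t satisfying d/dt KL(π_t‖μ_t) ≤ −(1/2)·FI_{Q̃}(π_t‖μ_t) + (2/c)·Λ. -/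
/-!
Write `φ = log(π_t/μ_t)`. Along the two forward equations the entropy production is
`d/dt KL(π_t‖μ_t) = ⟨φ, Qπ_t⟩ − Σ π_t(i) Q̃_{ji} e^{φ(j)−φ(i)}`, while `FI_{Q̃}(π_t‖μ_t) = H_{Q̃}(π_t, φ)`.
Testing the Lagrangian bound with `λφ`, `λ = c/2`, and using the rescaling bound for
`H_{Q̃}(π_t, λφ)` turns `λ · d/dt KL` into `Λ − (c/4) H_{Q̃}(π_t, φ)`; dividing by `λ` gives the claim.
-/

open Finset

open Real (exp log exp_sub exp_log log_div)

namespace RateMatrix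

variable {X : Type*} [Fintype X]

noncomputable def expFlux (Q : X → X → ℝ) (π φ : X → ℝ) : ℝ :=
  ∑ i, ∑ j, π i * Q j i * exp (φ j - φ i)

noncomputable def linFlux (Q : X → X → ℝ) (π φ : X → ℝ) : ℝ :=
  ∑ i, ∑ j, π i * Q j i * (φ j - φ i)

theorem Hq_eq_expFlux_sub_linFlux (Q : X → X → ℝ) (π φ : X → ℝ) :
    Hq Q π φ = expFlux Q π φ - linFlux Q π φ := by
  simp only [Hq, expFlux, linFlux, ← sum_sub_distrib, mul_sub]

theorem linFlux_const_mul (Q : X → X → ℝ) (π φ : X → ℝ) (a : ℝ) :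
    linFlux Q π (fun x => a * φ x) = a * linFlux Q π φ := by
  simp only [linFlux, mul_sum]
  exact sum_congr rfl fun i _ => sum_congr rfl fun j _ => by ring

theorem sum_sum_mul_eq_zero {Q : X → X → ℝ} (hQ : ∀ i, ∑ j, Q j i = 0) (v : X → ℝ) :
    ∑ j, ∑ i, Q j i * v i = 0 := by
  rw [sum_comm]
  exact sum_eq_zero fun i _ => by rw [← sum_mul, hQ i, zero_mul]

omit [Fintype X] in
theorem exp_log_div_sub {π μ : X → ℝ} (hπ : ∀ x, 0 < π x) (hμ : ∀ x, 0 < μ x) (i j : X) :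
    exp (log (π j / μ j) - log (π i / μ i)) = (π j / μ j) / (π i / μ i) := by
  rw [exp_sub, exp_log (div_pos (hπ j) (hμ j)), exp_log (div_pos (hπ i) (hμ i))]

theorem sum_mul_div_eq_expFlux (Q : X → X → ℝ) {π μ : X → ℝ}
    (hπ : ∀ x, 0 < π x) (hμ : ∀ x, 0 < μ x) :
    ∑ j, π j * (∑ i, Q j i * μ i) / μ j = expFlux Q π (fun x => log (π x / μ x)) := by
  rw [expFlux, sum_comm]
  refine sum_congr rfl fun j _ => ?_
  rw [mul_sum, sum_div]
  refine sum_congr rfl fun i _ => ?_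
  rw [exp_log_div_sub hπ hμ]
  have := (hπ i).ne'
  have := (hμ i).ne'
  have := (hμ j).ne'
  field_simp

/-- With `f = π/μ = e^φ` the integrand becomes `π(i) Q_{ji} (e^{φ(j)−φ(i)} − 1 − (φ(j)−φ(i)))`;
the `−1` terms cancel by the zero column sums. -/
theorem relFI_eq_Hq_log {Q : X → X → ℝ} (hQ : ∀ i, ∑ j, Q j i = 0) {π μ : X → ℝ}
    (hπ : ∀ x, 0 < π x) (hμ : ∀ x, 0 < μ x) :
    relFI Q π μ = Hq Q π (fun x => log (π x / μ x)) := by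
  have hterm : ∀ i j, μ i * Q j i *
      (π j / μ j - π i / μ i - π i / μ i * log ((π j / μ j) / (π i / μ i))) =
      π i * Q j i * (exp (log (π j / μ j) - log (π i / μ i))
        - (log (π j / μ j) - log (π i / μ i))) - π i * Q j i := by
    intro i j
    rw [exp_log_div_sub hπ hμ,
      log_div (div_pos (hπ j) (hμ j)).ne' (div_pos (hπ i) (hμ i)).ne']
    have := (hπ i).ne'
    have := (hμ i).ne'
    have := (hμ j).ne'
    field_simp
    ring
  have hcolumn : ∑ i, ∑ j, π i * Q j i = 0 :=
    sum_eq_zero fun i _ => by rw [← mul_sum, hQ i, mul_zero]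
  simp only [relFI, Hq, hterm, sum_sub_distrib, hcolumn, sub_zero]

end RateMatrix

open RateMatrix

section EntropyProduction

variable {X : Type*} [Fintype X]

theorem hasDerivAt_KLdiv {π μ : ℝ → X → ℝ} {π' μ' : X → ℝ} {t : ℝ}
    (hπ : ∀ x, π t x ≠ 0) (hμ : ∀ x, μ t x ≠ 0)
    (hπd : ∀ x, HasDerivAt (fun s => π s x) (π' x) t)
    (hμd : ∀ x, HasDerivAt (fun s => μ s x) (μ' x) t) :
    HasDerivAt (fun s => KLdiv (π s) (μ s))
      (∑ x, (π' x * log (π t x / μ t x) + π' x - π t x * μ' x / μ t x)) t := by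
  unfold KLdiv
  refine HasDerivAt.fun_sum fun x _ => ?_
  have hlog := ((hπd x).fun_div (hμd x) (hμ x)).log (div_ne_zero (hπ x) (hμ x))
  refine ((hπd x).mul hlog).congr_deriv ?_
  have := hπ x
  have := hμ x
  field_simp
  ring

/-- Entropy production along the forward equations `∂π = Qπ`, `∂μ = Q̃μ`. -/
theorem hasDerivAt_KLdiv_of_forward {Q Qt : X → X → ℝ} (hQ : ∀ i, ∑ j, Q j i = 0)
    {π μ : ℝ → X → ℝ} {t : ℝ} (hπ : ∀ x, 0 < π t x) (hμ : ∀ x, 0 < μ t x)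
    (hπd : ∀ j, HasDerivAt (fun s => π s j) (∑ i, Q j i * π t i) t)
    (hμd : ∀ j, HasDerivAt (fun s => μ s j) (∑ i, Qt j i * μ t i) t) :
    HasDerivAt (fun s => KLdiv (π s) (μ s))
      ((∑ j, log (π t j / μ t j) * ∑ i, Q j i * π t i) -
        expFlux Qt (π t) (fun x => log (π t x / μ t x))) t := by
  convert hasDerivAt_KLdiv (fun x => (hπ x).ne') (fun x => (hμ x).ne') hπd hμd using 1
  rw [sum_sub_distrib, sum_add_distrib, sum_sum_mul_eq_zero hQ, add_zero,
    sum_mul_div_eq_expFlux Qt hπ hμ]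
  simp only [mul_comm]

/-- Lagrangian duality step: test the bound `Λ` with `(c/2)φ` and absorb the rescaled `H`. -/
theorem sub_expFlux_le {Q : X → X → ℝ} {π φ p : X → ℝ} {c Λ : ℝ} (hc : 0 < c)
    (hresc : Hq Q π (fun x => c / 2 * φ x) ≤ (c / 2) ^ 2 / c * Hq Q π φ)
    (hΛ : (∑ j, c / 2 * φ j * p j) - expFlux Q π (fun x => c / 2 * φ x) ≤ Λ) :
    (∑ j, φ j * p j) - expFlux Q π φ ≤ -(1 / 2) * Hq Q π φ + (2 / c) * Λ := by
  have hcoef : (c / 2) ^ 2 / c = c / 4 := by field_simp; ring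
  rw [hcoef, Hq_eq_expFlux_sub_linFlux, linFlux_const_mul] at hresc
  have hpair : ∑ j, c / 2 * φ j * p j = c / 2 * ∑ j, φ j * p j := by
    rw [mul_sum]
    exact sum_congr rfl fun j _ => by ring
  rw [hpair] at hΛ
  have hE : expFlux Q π φ = Hq Q π φ + linFlux Q π φ := by
    rw [Hq_eq_expFlux_sub_linFlux]; ring
  refine le_of_mul_le_mul_left ?_ (half_pos hc)
  calc c / 2 * ((∑ j, φ j * p j) - expFlux Q π φ)
      = (c / 2 * ∑ j, φ j * p j) - expFlux Q π (fun x => c / 2 * φ x)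
          + expFlux Q π (fun x => c / 2 * φ x) - c / 2 * expFlux Q π φ := by ring
    _ ≤ Λ + (c / 4 * Hq Q π φ + c / 2 * linFlux Q π φ)
          - c / 2 * (Hq Q π φ + linFlux Q π φ) := by rw [← hE]; linarith
    _ = c / 2 * (-(1 / 2) * Hq Q π φ + (2 / c) * Λ) := by field_simp; ring

end EntropyProduction

theorem stmt_3_general {X : Type*} [Fintype X]
    (c : ℝ) (hc : c ∈ Set.Ioo (0 : ℝ) 1)
    (Q Qt : X → X → ℝ) (hQ : IsRateMatrix Q) (hQt : IsRateMatrix Qt)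
    (π μ : ℝ → X → ℝ) (t : ℝ)
    (hπpos : ∀ s x, 0 < π s x) (hμpos : ∀ s x, 0 < μ s x)
    (hπd : ∀ j : X, HasDerivAt (fun s => π s j) (∑ i, Q j i * π t i) t)
    (hμd : ∀ j : X, HasDerivAt (fun s => μ s j) (∑ i, Qt j i * μ t i) t)
    (hHresc : ∀ lam ∈ Set.Ioo (0 : ℝ) 1,
      Hq Qt (π t) (fun x => lam * Real.log (π t x / μ t x)) ≤
        lam ^ 2 / c * Hq Qt (π t) (fun x => Real.log (π t x / μ t x)))
    (Λ : ℝ)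
    (hΛ : ∀ φ : X → ℝ,
      (∑ j, φ j * ∑ i, Q j i * π t i) -
          (∑ i, ∑ j, π t i * Qt j i * Real.exp (φ j - φ i)) ≤ Λ) :
    ∃ d : ℝ, HasDerivAt (fun s => KLdiv (π s) (μ s)) d t ∧
      d ≤ -(1 / 2) * relFI Qt (π t) (μ t) + (2 / c) * Λ := by
  obtain ⟨hc0, hc1⟩ := hc
  refine ⟨_, hasDerivAt_KLdiv_of_forward hQ.2 (hπpos t) (hμpos t) hπd hμd, ?_⟩
  rw [relFI_eq_Hq_log hQt.2 (hπpos t) (hμpos t)]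
  exact sub_expFlux_le hc0 (hHresc (c / 2) ⟨by positivity, by linarith⟩)
    (hΛ fun x => c / 2 * log (π t x / μ t x))

/-- FIR-type inequality: under the rescaling property of `H_{Q̃}(π_t, ·)` and the bound
`‖log(π_t/μ_t)‖_∞ ≤ B`, for any upper bound `Λ` on the Lagrangian `L_{Q̃}(π_t, Qπ_t)`,
the derivative of `s ↦ KL(π_s‖μ_s)` at `t` is at most
`−(1/2)·FI_{Q̃}(π_t‖μ_t) + (2/c)·Λ`. -/
theorem stmt_3 {X : Type*} [Fintype X] [Nonempty X]
    (B c : ℝ) (hB : 0 < B) (hc : c ∈ Set.Ioo (0 : ℝ) 1)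
    (Q Qt : X → X → ℝ) (hQ : IsRateMatrix Q) (hQt : IsRateMatrix Qt)
    (π μ : ℝ → X → ℝ) (t : ℝ)
    (hπpos : ∀ s x, 0 < π s x) (hμpos : ∀ s x, 0 < μ s x)
    (hπsum : ∀ s, ∑ x, π s x = 1) (hμsum : ∀ s, ∑ x, μ s x = 1)
    (hπd : ∀ j : X, HasDerivAt (fun s => π s j) (∑ i, Q j i * π t i) t)
    (hμd : ∀ j : X, HasDerivAt (fun s => μ s j) (∑ i, Qt j i * μ t i) t)
    (hlogB : ∀ x, |Real.log (π t x / μ t x)| ≤ B)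
    (hHresc : ∀ lam ∈ Set.Ioo (0 : ℝ) 1,
      Hq Qt (π t) (fun x => lam * Real.log (π t x / μ t x)) ≤
        lam ^ 2 / c * Hq Qt (π t) (fun x => Real.log (π t x / μ t x)))
    (Λ : ℝ)
    (hΛ : ∀ φ : X → ℝ,
      (∑ j, φ j * ∑ i, Q j i * π t i) -
          (∑ i, ∑ j, π t i * Qt j i * Real.exp (φ j - φ i)) ≤ Λ) :
    ∃ d : ℝ, HasDerivAt (fun s => KLdiv (π s) (μ s)) d t ∧
      d ≤ -(1 / 2) * relFI Qt (π t) (μ t) + (2 / c) * Λ :=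
  stmt_3_general c hc Q Qt hQ hQt π μ t hπpos hμpos hπd hμd hHresc Λ hΛ
end

section
/- Let 𝒳 be a nonempty finite set and B > 0. There exists a constant c ∈ (0,1), depending only on B, such that for every positive probability mass function π on 𝒳, every rate matrix Q̃ on 𝒳, every φ : 𝒳 → ℝ with ‖φ‖_∞ ≤ B, and every λ ∈ (0,1): H_{Q̃}(π, λφ) ≤ (λ²/c)·H_{Q̃}(π, φ). -/
open Finset

/-
The rescaling λφ enters `H_Q` only through `g(t) = eᵗ - t - 1` at the increments
`t = φ(j) - φ(i)`, the `-1` being free because the columns of `Q` sum to zero; off the diagonal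
the weights `π(i) Q_{ji}` are nonnegative, and on the diagonal `t = 0`. Comparing `g` with its
quadratic part, `t²/2 · e^{-|t|} ≤ g(t) ≤ t²/2 · e^{|t|}`, gives
`g(λt) ≤ λ² e^{2|t|} g(t)`, and `|t| ≤ 2B`, so `c = e^{-4B}` works.
-/

lemma exp_mul_exp_neg (x : ℝ) : Real.exp x * Real.exp (-x) = 1 := by
  rw [← Real.exp_add, add_neg_cancel, Real.exp_zero]

lemma exp_le_one_add_add_sq_div_two_of_nonpos {s : ℝ} (hs : s ≤ 0) :
    Real.exp s ≤ 1 + s + s ^ 2 / 2 := by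
  have hquad := Real.quadratic_le_exp_of_nonneg (neg_nonneg.mpr hs)
  -- `(1 + s + s²/2)(1 - s + s²/2) = 1 + s⁴/4 ≥ 1`
  nlinarith [Real.exp_pos s, sq_nonneg (s ^ 2), exp_mul_exp_neg s]

lemma antitone_one_sub_mul_exp_add_sq_div_two :
    Antitone fun u : ℝ => (1 - u) * Real.exp u + u ^ 2 / 2 := by
  apply antitone_of_deriv_nonpos (by fun_prop)
  intro u
  have hderiv : HasDerivAt (fun u : ℝ => (1 - u) * Real.exp u + u ^ 2 / 2)
      (u * (1 - Real.exp u)) u := by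
    refine ((((hasDerivAt_id' u).const_sub 1).mul (Real.hasDerivAt_exp u)).add
      ((hasDerivAt_pow 2 u).div_const 2)).congr_deriv ?_
    push_cast
    ring
  rw [hderiv.deriv]
  rcases le_total u 0 with hu | hu
  · exact mul_nonpos_of_nonpos_of_nonneg hu (sub_nonneg.mpr (Real.exp_le_one_iff.mpr hu))
  · exact mul_nonpos_of_nonneg_of_nonpos hu (sub_nonpos.mpr (Real.one_le_exp hu))

lemma sq_div_two_mul_exp_neg_abs_le (t : ℝ) :
    t ^ 2 / 2 * Real.exp (-|t|) ≤ Real.exp t - t - 1 := by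
  rcases le_total 0 t with ht | ht
  · have hquad := Real.quadratic_le_exp_of_nonneg ht
    have : Real.exp (-|t|) ≤ 1 := Real.exp_le_one_iff.mpr (neg_nonpos.mpr (abs_nonneg t))
    nlinarith [sq_nonneg t]
  · have h := antitone_one_sub_mul_exp_add_sq_div_two (neg_nonneg.mpr ht)
    norm_num at h
    rw [abs_of_nonpos ht, neg_neg]
    linear_combination Real.exp t * h - (1 + t) * exp_mul_exp_neg t

lemma exp_sub_sub_one_le_sq_div_two_mul_exp_abs (t : ℝ) :
    Real.exp t - t - 1 ≤ t ^ 2 / 2 * Real.exp |t| := by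
  rcases le_total 0 t with ht | ht
  · have h := antitone_one_sub_mul_exp_add_sq_div_two (neg_nonpos.mpr ht)
    norm_num at h
    rw [abs_of_nonneg ht]
    linear_combination Real.exp t * h + (1 + t) * exp_mul_exp_neg t
  · have hquad := exp_le_one_add_add_sq_div_two_of_nonpos ht
    have : 1 ≤ Real.exp |t| := Real.one_le_exp (abs_nonneg t)
    nlinarith [sq_nonneg t]

lemma exp_mul_sub_mul_sub_one_le {a t lam : ℝ} (ht : |t| ≤ a) (hlam : |lam| ≤ 1) :
    Real.exp (lam * t) - lam * t - 1 ≤ lam ^ 2 * Real.exp (2 * a) * (Real.exp t - t - 1) := by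
  have habs : |lam * t| ≤ |t| := by
    rw [abs_mul]
    exact mul_le_of_le_one_left (abs_nonneg t) hlam
  have hexp : Real.exp |t| = Real.exp (2 * |t|) * Real.exp (-|t|) := by
    rw [← Real.exp_add]; ring_nf
  calc Real.exp (lam * t) - lam * t - 1 ≤ (lam * t) ^ 2 / 2 * Real.exp |lam * t| :=
        exp_sub_sub_one_le_sq_div_two_mul_exp_abs _
    _ ≤ (lam * t) ^ 2 / 2 * Real.exp |t| := by gcongr
    _ = lam ^ 2 * Real.exp (2 * |t|) * (t ^ 2 / 2 * Real.exp (-|t|)) := by rw [hexp]; ring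
    _ ≤ lam ^ 2 * Real.exp (2 * a) * (Real.exp t - t - 1) := by
        gcongr
        · exact sq_div_two_mul_exp_neg_abs_le t

lemma Hq_eq_sum_exp_sub_sub_one {X : Type*} [Fintype X] {Q : X → X → ℝ}
    (hQ : ∀ i, ∑ j, Q j i = 0) (π φ : X → ℝ) :
    Hq Q π φ = ∑ i, ∑ j, π i * Q j i * (Real.exp (φ j - φ i) - (φ j - φ i) - 1) := by
  refine sum_congr rfl fun i _ => ?_
  simp only [mul_sub, sum_sub_distrib, mul_one, ← mul_sum, hQ i, mul_zero, sub_zero]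

lemma Hq_mul_le {X : Type*} [Fintype X] {Q : X → X → ℝ} (hQ : IsRateMatrix Q)
    {π φ : X → ℝ} (hπ : ∀ x, 0 ≤ π x) {B lam : ℝ} (hφ : ∀ x, |φ x| ≤ B)
    (hlam : |lam| ≤ 1) :
    Hq Q π (fun x => lam * φ x) ≤ lam ^ 2 * Real.exp (4 * B) * Hq Q π φ := by
  rw [Hq_eq_sum_exp_sub_sub_one hQ.2, Hq_eq_sum_exp_sub_sub_one hQ.2, mul_sum]
  refine sum_le_sum fun i _ => ?_
  rw [mul_sum]
  refine sum_le_sum fun j _ => ?_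
  rcases eq_or_ne j i with rfl | hji
  · simp
  have hincr : |φ j - φ i| ≤ 2 * B := by
    linarith [abs_sub (φ j) (φ i), hφ i, hφ j]
  have hg := exp_mul_sub_mul_sub_one_le hincr hlam
  rw [show (4 : ℝ) * B = 2 * (2 * B) by ring, ← mul_sub]
  linear_combination mul_le_mul_of_nonneg_left hg (mul_nonneg (hπ i) (hQ.1 i j hji))

/-- There exists a constant `c ∈ (0,1)` depending only on `B` such that for every
nonempty finite set, every positive pmf `π`, every rate matrix `Q̃`, every `φ` with
`‖φ‖_∞ ≤ B`, and every `λ ∈ (0,1)`: `H_{Q̃}(π, λφ) ≤ (λ²/c)·H_{Q̃}(π, φ)`. -/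
theorem stmt_4 (B : ℝ) (hB : 0 < B) :
    ∃ c : ℝ, c ∈ Set.Ioo (0 : ℝ) 1 ∧
      ∀ (X : Type) [Fintype X] [Nonempty X]
        (π : X → ℝ), (∀ x, 0 < π x) → (∑ x, π x = 1) →
        ∀ Qt : X → X → ℝ, IsRateMatrix Qt →
        ∀ φ : X → ℝ, (∀ x, |φ x| ≤ B) →
        ∀ lam ∈ Set.Ioo (0 : ℝ) 1,
          Hq Qt π (fun x => lam * φ x) ≤ lam ^ 2 / c * Hq Qt π φ := by
  refine ⟨Real.exp (-(4 * B)), ⟨Real.exp_pos _, Real.exp_lt_one_iff.mpr (by linarith)⟩, ?_⟩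
  intro X _ _ π hπ _ Qt hQ φ hφ lam ⟨hlam0, hlam1⟩
  rw [Real.exp_neg, div_inv_eq_mul]
  exact Hq_mul_le hQ (fun x => (hπ x).le) hφ (abs_le.mpr ⟨by linarith, hlam1.le⟩)
end

section
/- Let 𝒳 be a nonempty finite set and Q, Q̃ rate matrices on 𝒳. Let π, μ : ℝ → (𝒳 → ℝ) be families of positive probability mass functions such that at a time t the componentwise derivatives satisfy ∂_t π_t = Q π_t and ∂_t μ_t = Q̃ μ_t. Then the function s ↦ KL(π_s‖μ_s) is differentiable at t with d/dt KL(π_t‖μ_t) = −FI_{Q̃}(π_t‖μ_t) − Σ_{j∈𝒳} log(π_t(j)/μ_t(j)) · ((Q̃ − Q)π_t)(j), where ((Q̃ − Q)π_t)(j) := Σ_{i∈𝒳} (Q̃_{ji} − Q_{ji}) π_t(i). -/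
open Finset

/-!
Differentiating `π log(π/μ)` termwise gives `Σ_j (log(π/μ)_j + 1)(Qπ)_j − (π/μ)_j (Q̃μ)_j`.
Zero column sums kill `Σ_j (Qπ)_j`, and they also collapse `FI_{Q̃}(π‖μ)` to
`Σ_j (π/μ)_j (Q̃μ)_j − Σ_j log(π/μ)_j (Q̃π)_j`; the two expressions then agree.
-/

section

variable {X : Type*} [Fintype X]

theorem sum_sum_mul_eq_zero_of_colSum_eq_zero {Q : X → X → ℝ}
    (hQ : ∀ i, ∑ j, Q j i = 0) (p : X → ℝ) : ∑ j, ∑ i, Q j i * p i = 0 := by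
  rw [sum_comm]
  simp only [← sum_mul, hQ, zero_mul, sum_const_zero]

/-- The terms `f(i)` and `f(i) log f(i)` of the integrand vanish after summing over `j`. -/
theorem relFI_eq_of_colSum_eq_zero {Q : X → X → ℝ} (hQ : ∀ i, ∑ j, Q j i = 0)
    {p m : X → ℝ} (hp : ∀ x, 0 < p x) (hm : ∀ x, 0 < m x) :
    relFI Q p m = ∑ j, p j / m j * ∑ i, Q j i * m i
      - ∑ j, Real.log (p j / m j) * ∑ i, Q j i * p i := by
  have hterm : ∀ i j, m i * Q j i *
      (p j / m j - p i / m i - p i / m i * Real.log ((p j / m j) / (p i / m i)))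
      = p j / m j * (Q j i * m i) - Q j i * p i
        - (Real.log (p j / m j) * (Q j i * p i) - p i * Real.log (p i / m i) * Q j i) := by
    intro i j
    rw [Real.log_div (div_pos (hp j) (hm j)).ne' (div_pos (hp i) (hm i)).ne']
    have hmi : m i * (p i / m i) = p i := mul_div_cancel₀ _ (hm i).ne'
    linear_combination (-Q j i * (1 + Real.log (p j / m j) - Real.log (p i / m i))) * hmi
  have hlog : ∑ i, ∑ j, p i * Real.log (p i / m i) * Q j i = 0 := by
    simp only [← mul_sum, hQ, mul_zero, sum_const_zero]
  unfold relFI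
  simp only [hterm, sum_sub_distrib, hlog]
  rw [sum_comm (f := fun i j => p j / m j * (Q j i * m i)),
    sum_comm (f := fun i j => Real.log (p j / m j) * (Q j i * p i)),
    sum_comm (f := fun i j => Q j i * p i), sum_sum_mul_eq_zero_of_colSum_eq_zero hQ]
  simp only [mul_sum, sub_zero]

theorem hasDerivAt_KLdiv_s5 {p m : ℝ → X → ℝ} {p' m' : X → ℝ} {t : ℝ}
    (hpd : ∀ j, HasDerivAt (fun s => p s j) (p' j) t)
    (hmd : ∀ j, HasDerivAt (fun s => m s j) (m' j) t)
    (hp : ∀ j, 0 < p t j) (hm : ∀ j, 0 < m t j) :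
    HasDerivAt (fun s => KLdiv (p s) (m s))
      (∑ j, ((Real.log (p t j / m t j) + 1) * p' j - p t j / m t j * m' j)) t := by
  unfold KLdiv
  refine HasDerivAt.fun_sum fun j _ => ?_
  have hratio := ((hpd j).fun_div (hmd j) (hm j).ne').log (div_pos (hp j) (hm j)).ne'
  refine ((hpd j).fun_mul hratio).congr_deriv ?_
  have := (hp j).ne'
  have := (hm j).ne'
  field_simp
  ring

end

theorem stmt_5_general {X : Type*} [Fintype X]
    (Q Qt : X → X → ℝ) (hQ : IsRateMatrix Q) (hQt : IsRateMatrix Qt)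
    (π μ : ℝ → X → ℝ) (t : ℝ)
    (hπpos : ∀ s x, 0 < π s x) (hμpos : ∀ s x, 0 < μ s x)
    (hπd : ∀ j : X, HasDerivAt (fun s => π s j) (∑ i, Q j i * π t i) t)
    (hμd : ∀ j : X, HasDerivAt (fun s => μ s j) (∑ i, Qt j i * μ t i) t) :
    HasDerivAt (fun s => KLdiv (π s) (μ s))
      (-relFI Qt (π t) (μ t) -
        ∑ j, Real.log (π t j / μ t j) * ∑ i, (Qt j i - Q j i) * π t i) t := by
  refine (hasDerivAt_KLdiv_s5 hπd hμd (hπpos t) (hμpos t)).congr_deriv ?_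
  rw [relFI_eq_of_colSum_eq_zero hQt.2 (hπpos t) (hμpos t)]
  have hmass := sum_sum_mul_eq_zero_of_colSum_eq_zero hQ.2 (π t)
  simp only [sub_mul, sum_sub_distrib, mul_sub, add_mul, one_mul, sum_add_distrib, hmass]
  ring

/-- Time derivative of the KL divergence along two continuous-time Markov chains:
if `∂_t π_t = Q π_t` and `∂_t μ_t = Q̃ μ_t` at time `t`, then
`d/dt KL(π_t‖μ_t) = −FI_{Q̃}(π_t‖μ_t) − Σ_j log(π_t(j)/μ_t(j))·((Q̃−Q)π_t)(j)`. -/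
theorem stmt_5 {X : Type*} [Fintype X] [Nonempty X]
    (Q Qt : X → X → ℝ) (hQ : IsRateMatrix Q) (hQt : IsRateMatrix Qt)
    (π μ : ℝ → X → ℝ) (t : ℝ)
    (hπpos : ∀ s x, 0 < π s x) (hμpos : ∀ s x, 0 < μ s x)
    (hπsum : ∀ s, ∑ x, π s x = 1) (hμsum : ∀ s, ∑ x, μ s x = 1)
    (hπd : ∀ j : X, HasDerivAt (fun s => π s j) (∑ i, Q j i * π t i) t)
    (hμd : ∀ j : X, HasDerivAt (fun s => μ s j) (∑ i, Qt j i * μ t i) t) :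
    HasDerivAt (fun s => KLdiv (π s) (μ s))
      (-relFI Qt (π t) (μ t) -
        ∑ j, Real.log (π t j / μ t j) * ∑ i, (Qt j i - Q j i) * π t i) t :=
  stmt_5_general Q Qt hQ hQt π μ t hπpos hμpos hπd hμd
end

section
/- Let 𝒳 be a nonempty finite set, Q̃ a rate matrix on 𝒳, and π, μ positive probability mass functions on 𝒳. With φ := log(π/μ), one has the identity H_{Q̃}(π, φ) = FI_{Q̃}(π‖μ). -/
open Finset

theorem sum_sum_mul_eq_zero_of_colsum_eq_zero {X : Type*} [Fintype X] {Q : X → X → ℝ}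
    (hQ : ∀ i, ∑ j, Q j i = 0) (w : X → ℝ) : ∑ i, ∑ j, w i * Q j i = 0 := by
  simp [← Finset.mul_sum, hQ]

/-- Writing `f = π / μ` and `x = f j / f i`, both sides equal `μ i (f j - f i log x)`,
because `π i = μ i f i`. -/
theorem mul_exp_log_ratio_sub_eq {πi πj μi μj : ℝ}
    (hπi : 0 < πi) (hπj : 0 < πj) (hμi : 0 < μi) (hμj : 0 < μj) :
    πi * (Real.exp (Real.log (πj / μj) - Real.log (πi / μi))
        - (Real.log (πj / μj) - Real.log (πi / μi)))
      = μi * (πj / μj - πi / μi - πi / μi * Real.log ((πj / μj) / (πi / μi))) + πi := by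
  rw [← Real.log_div (by positivity) (by positivity), Real.exp_log (by positivity)]
  field_simp
  ring

theorem stmt_6_general {X : Type*} [Fintype X]
    (Qt : X → X → ℝ) (hQt : IsRateMatrix Qt)
    (π μ : X → ℝ)
    (hπpos : ∀ x, 0 < π x) (hμpos : ∀ x, 0 < μ x) :
    Hq Qt π (fun x => Real.log (π x / μ x)) = relFI Qt π μ := by
  have termwise : ∀ i j, π i * Qt j i *
      (Real.exp (Real.log (π j / μ j) - Real.log (π i / μ i))
        - (Real.log (π j / μ j) - Real.log (π i / μ i)))
      = μ i * Qt j i *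
          (π j / μ j - π i / μ i - π i / μ i * Real.log ((π j / μ j) / (π i / μ i)))
        + π i * Qt j i := fun i j => by
    rw [mul_right_comm, mul_exp_log_ratio_sub_eq (hπpos i) (hπpos j) (hμpos i) (hμpos j)]
    ring
  simp only [Hq, relFI, termwise, Finset.sum_add_distrib,
    sum_sum_mul_eq_zero_of_colsum_eq_zero hQt.2, add_zero]

/-- With `φ := log(π/μ)`, one has the identity `H_{Q̃}(π, φ) = FI_{Q̃}(π‖μ)`. -/
theorem stmt_6 {X : Type*} [Fintype X] [Nonempty X]
    (Qt : X → X → ℝ) (hQt : IsRateMatrix Qt)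
    (π μ : X → ℝ)
    (hπpos : ∀ x, 0 < π x) (hμpos : ∀ x, 0 < μ x)
    (hπsum : ∑ x, π x = 1) (hμsum : ∑ x, μ x = 1) :
    Hq Qt π (fun x => Real.log (π x / μ x)) = relFI Qt π μ :=
  stmt_6_general Qt hQt π μ hπpos hμpos
end

section
/- Let 𝒳 be a nonempty finite set, 0 ≤ ε ≤ 1 and M > 0. Let Q and Q̃ be rate matrices on 𝒳 such that |Q̃_{ji} − Q_{ji}| ≤ ε·Q_{ji} for all j ≠ i, and Σ_{j∈𝒳} |Q_{ji}| ≤ M for every i. Let μ be a probability mass function on 𝒳 (nonnegative, summing to 1). Then for every φ : 𝒳 → ℝ: Σ_{i,j∈𝒳} μ(i) Q̃_{ji} φ(j) − Σ_{i,j∈𝒳} μ(i) Q_{ji} e^{φ(j)−φ(i)} ≤ M·ε. (That is, the Lagrangian L_Q(μ, Q̃μ) := sup_{φ:𝒳→ℝ} [⟨φ, Q̃μ⟩ − Σ_{i,j} μ(i) Q_{ji} e^{φ(j)−φ(i)}] is at most Mε.) -/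
open Finset

/-
For fixed `i`, the zero column sums let one replace `φ j` by `φ j - φ i` in the first sum and
`e^{φ j - φ i}` by `e^{φ j - φ i} - 1` in the second, so the `i`-th column contributes
`Σ_j (Q̃_{ji} x_j - Q_{ji} (e^{x_j} - 1))` with `x_j = φ j - φ i`. Writing `Q̃ = Q + (Q̃ - Q)`, each
off-diagonal term is at most `Q_{ji} (x + ε|x| + 1 - e^x) ≤ ε Q_{ji}`, an elementary inequality
for `0 ≤ ε ≤ 1`. Summing gives `ε Σ_j |Q_{ji}| ≤ M ε` per column, and `μ` averages the columns.
-/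

lemma add_mul_abs_add_one_sub_exp_le {ε : ℝ} (hε0 : 0 ≤ ε) (hε1 : ε ≤ 1) (x : ℝ) :
    x + ε * |x| + 1 - Real.exp x ≤ ε := by
  rcases le_or_gt 0 x with hx | hx
  · rw [abs_of_nonneg hx]
    -- `ε x ≤ ε (1 + x²) / 2 ≤ ε + x² / 2`
    nlinarith [Real.quadratic_le_exp_of_nonneg hx, mul_nonneg hε0 (sq_nonneg (x - 1))]
  · rw [abs_of_neg hx]
    -- `(1 - ε)(x + 1) ≤ max (x + 1) 0 ≤ e^x`
    nlinarith [Real.add_one_le_exp x, Real.exp_pos x, mul_nonneg hε0 (sub_nonneg.2 hε1),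
      abs_nonneg (x + 1), le_abs_self (x + 1), neg_abs_le (x + 1)]

lemma mul_sub_mul_exp_sub_one_le {ε q qt : ℝ} (hε0 : 0 ≤ ε) (hε1 : ε ≤ 1) (hq : 0 ≤ q)
    (happrox : |qt - q| ≤ ε * q) (x : ℝ) :
    qt * x - q * (Real.exp x - 1) ≤ ε * q := by
  have hperturb : (qt - q) * x ≤ ε * q * |x| :=
    calc (qt - q) * x ≤ |qt - q| * |x| := by rw [← abs_mul]; exact le_abs_self _
      _ ≤ ε * q * |x| := mul_le_mul_of_nonneg_right happrox (abs_nonneg x)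
  nlinarith [mul_le_mul_of_nonneg_left (add_mul_abs_add_one_sub_exp_le hε0 hε1 x) hq]

lemma IsRateMatrix.sum_mul_eq_sum_mul_sub {X : Type*} [Fintype X] {Q : X → X → ℝ}
    (hQ : IsRateMatrix Q) (i : X) (f : X → ℝ) (c : ℝ) :
    ∑ j, Q j i * f j = ∑ j, Q j i * (f j - c) := by
  simp only [mul_sub, Finset.sum_sub_distrib, ← Finset.sum_mul, hQ.2 i, zero_mul, sub_zero]

lemma IsRateMatrix.column_sub_le {X : Type*} [Fintype X] {ε : ℝ} (hε0 : 0 ≤ ε) (hε1 : ε ≤ 1)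
    {Q Qt : X → X → ℝ} (hQ : IsRateMatrix Q) (hQt : IsRateMatrix Qt)
    (happrox : ∀ i j : X, j ≠ i → |Qt j i - Q j i| ≤ ε * Q j i) (φ : X → ℝ) (i : X) :
    (∑ j, Qt j i * φ j) - ∑ j, Q j i * Real.exp (φ j - φ i) ≤ ε * ∑ j, |Q j i| := by
  rw [hQt.sum_mul_eq_sum_mul_sub i φ (φ i), hQ.sum_mul_eq_sum_mul_sub i _ 1,
    ← Finset.sum_sub_distrib, Finset.mul_sum]
  refine Finset.sum_le_sum fun j _ => ?_
  rcases eq_or_ne j i with rfl | hji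
  · simp [mul_nonneg hε0 (abs_nonneg _)]
  · rw [abs_of_nonneg (hQ.1 i j hji)]
    exact mul_sub_mul_exp_sub_one_le hε0 hε1 (hQ.1 i j hji) (happrox i j hji) _

lemma sum_mul_le_of_le {X : Type*} [Fintype X] {μ f : X → ℝ} {C : ℝ} (hμ0 : ∀ x, 0 ≤ μ x)
    (hμsum : ∑ x, μ x = 1) (hf : ∀ x, f x ≤ C) :
    ∑ x, μ x * f x ≤ C :=
  calc ∑ x, μ x * f x ≤ ∑ x, μ x * C :=
        Finset.sum_le_sum fun x _ => mul_le_mul_of_nonneg_left (hf x) (hμ0 x)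
    _ = C := by rw [← Finset.sum_mul, hμsum, one_mul]

theorem stmt_7_general {X : Type*} [Fintype X]
    (ε M : ℝ) (hε0 : 0 ≤ ε) (hε1 : ε ≤ 1)
    (Q Qt : X → X → ℝ) (hQ : IsRateMatrix Q) (hQt : IsRateMatrix Qt)
    (happrox : ∀ i j : X, j ≠ i → |Qt j i - Q j i| ≤ ε * Q j i)
    (hbound : ∀ i : X, ∑ j, |Q j i| ≤ M)
    (μ : X → ℝ) (hμ0 : ∀ x, 0 ≤ μ x) (hμsum : ∑ x, μ x = 1)
    (φ : X → ℝ) :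
    (∑ i, ∑ j, μ i * Qt j i * φ j) -
        (∑ i, ∑ j, μ i * Q j i * Real.exp (φ j - φ i)) ≤ M * ε := by
  have hcolumn (i : X) :
      (∑ j, Qt j i * φ j) - ∑ j, Q j i * Real.exp (φ j - φ i) ≤ M * ε :=
    calc _ ≤ ε * ∑ j, |Q j i| := hQ.column_sub_le hε0 hε1 hQt happrox φ i
      _ ≤ M * ε := by rw [mul_comm M]; exact mul_le_mul_of_nonneg_left (hbound i) hε0
  calc _ = ∑ i, μ i * ((∑ j, Qt j i * φ j) - ∑ j, Q j i * Real.exp (φ j - φ i)) := by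
        simp only [mul_sub, Finset.mul_sum, Finset.sum_sub_distrib, mul_assoc]
    _ ≤ M * ε := sum_mul_le_of_le hμ0 hμsum hcolumn

/-- Bound on the Lagrangian `L_Q(μ, Q̃μ)`: if `|Q̃_{ji} − Q_{ji}| ≤ ε·Q_{ji}` off the diagonal
and `Σ_j |Q_{ji}| ≤ M`, then for every `φ`,
`Σ_{i,j} μ(i) Q̃_{ji} φ(j) − Σ_{i,j} μ(i) Q_{ji} e^{φ(j)−φ(i)} ≤ M·ε`. -/
theorem stmt_7 {X : Type*} [Fintype X] [Nonempty X]
    (ε M : ℝ) (hε0 : 0 ≤ ε) (hε1 : ε ≤ 1) (hM : 0 < M)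
    (Q Qt : X → X → ℝ) (hQ : IsRateMatrix Q) (hQt : IsRateMatrix Qt)
    (happrox : ∀ i j : X, j ≠ i → |Qt j i - Q j i| ≤ ε * Q j i)
    (hbound : ∀ i : X, ∑ j, |Q j i| ≤ M)
    (μ : X → ℝ) (hμ0 : ∀ x, 0 ≤ μ x) (hμsum : ∑ x, μ x = 1)
    (φ : X → ℝ) :
    (∑ i, ∑ j, μ i * Qt j i * φ j) -
        (∑ i, ∑ j, μ i * Q j i * Real.exp (φ j - φ i)) ≤ M * ε :=
  stmt_7_general ε M hε0 hε1 Q Qt hQ hQt happrox hbound μ hμ0 hμsum φ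
end

section
/- Let 𝒳 be a nonempty finite set. Let A : 𝒳 × 𝒳 → ℝ satisfy A_{ij} ≥ 0 for all i ≠ j (forward jump rates), and let s, t : 𝒳 × 𝒳 → ℝ satisfy s_{ij} > 0 and t_{ij} > 0 for all i ≠ j (true and estimated concrete scores). Define matrices Q and Q̃ by Q_{ji} := A_{ij}·s_{ij} and Q̃_{ji} := A_{ij}·t_{ij} for j ≠ i, with diagonal entries chosen so that both have zero column sums. Let π be a positive probability mass function on 𝒳. Then for every φ : 𝒳 → ℝ: Σ_{i,j∈𝒳} π(i) Q_{ji} φ(j) − Σ_{i,j∈𝒳} π(i) Q̃_{ji} e^{φ(j)−φ(i)} ≤ Σ_{i≠j} π(i) A_{ij} s_{ij} K(t_{ij}/s_{ij}), where K(a) := a − 1 − log a. (That is, the Lagrangian L_{Q̃}(π, Qπ) is bounded by the score-entropy error.) -/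
open Finset

/-!
Row by row, the zero column sums let one replace `φ j` by `φ j - φ i` and `e^{φ j - φ i}` by
`e^{φ j - φ i} - 1`, which kills the diagonal. Each off-diagonal term is then a Fenchel–Young
inequality: `a K(b/a)` is the convex conjugate of `x ↦ b (e^x - 1)` evaluated at `a`, i.e.
`sup_x (a x - b (e^x - 1)) = b - a - a log (b/a)`.
-/


lemma mul_sub_mul_exp_sub_one_le_s8 {a b : ℝ} (ha : 0 < a) (hb : 0 < b) (x : ℝ) :
    a * x - b * (Real.exp x - 1) ≤ a * (b / a - 1 - Real.log (b / a)) := by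
  have htangent : a * (x + Real.log (b / a) + 1) ≤ b * Real.exp x := by
    have h := Real.add_one_le_exp (x + Real.log (b / a))
    rw [Real.exp_add, Real.exp_log (by positivity)] at h
    calc a * (x + Real.log (b / a) + 1) ≤ a * (Real.exp x * (b / a)) := by gcongr
      _ = b * Real.exp x := by field_simp
  have hK : a * (b / a - 1 - Real.log (b / a)) = b - a - a * Real.log (b / a) := by field_simp
  linarith

lemma sum_mul_eq_sum_erase_mul_sub {X : Type*} [Fintype X] [DecidableEq X] {c : X → ℝ}
    (hc : ∑ j, c j = 0) (f : X → ℝ) (i : X) :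
    ∑ j, c j * f j = ∑ j ∈ univ.erase i, c j * (f j - f i) := by
  rw [sum_erase _ (by simp)]
  simp only [mul_sub, sum_sub_distrib, ← sum_mul, hc, zero_mul, sub_zero]

theorem stmt_8_general {X : Type*} [Fintype X] [DecidableEq X]
    (A s t : X → X → ℝ)
    (hA : ∀ i j : X, i ≠ j → 0 ≤ A i j)
    (hs : ∀ i j : X, i ≠ j → 0 < s i j)
    (ht : ∀ i j : X, i ≠ j → 0 < t i j)
    (Q Qt : X → X → ℝ)
    (hQoff : ∀ i j : X, j ≠ i → Q j i = A i j * s i j)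
    (hQtoff : ∀ i j : X, j ≠ i → Qt j i = A i j * t i j)
    (hQcol : ∀ i : X, ∑ j, Q j i = 0)
    (hQtcol : ∀ i : X, ∑ j, Qt j i = 0)
    (π : X → ℝ) (hπpos : ∀ x, 0 < π x)
    (φ : X → ℝ) :
    (∑ i, ∑ j, π i * Q j i * φ j) -
        (∑ i, ∑ j, π i * Qt j i * Real.exp (φ j - φ i)) ≤
      ∑ i, ∑ j ∈ Finset.univ.erase i,
        π i * A i j * s i j * (t i j / s i j - 1 - Real.log (t i j / s i j)) := by
  rw [← sum_sub_distrib]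
  refine sum_le_sum fun i _ => ?_
  have hcol (R : X → X → ℝ) (hR : ∑ j, R j i = 0) : ∑ j, π i * R j i = 0 := by
    rw [← mul_sum, hR, mul_zero]
  rw [sum_mul_eq_sum_erase_mul_sub (hcol Q (hQcol i)) φ i,
    sum_mul_eq_sum_erase_mul_sub (hcol Qt (hQtcol i)) (fun j => Real.exp (φ j - φ i)) i,
    ← sum_sub_distrib]
  refine sum_le_sum fun j hj => ?_
  have hji : j ≠ i := ne_of_mem_erase hj
  have hweight : 0 ≤ π i * A i j := mul_nonneg (hπpos i).le (hA i j hji.symm)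
  have hterm := mul_le_mul_of_nonneg_left
    (mul_sub_mul_exp_sub_one_le_s8 (hs i j hji.symm) (ht i j hji.symm) (φ j - φ i)) hweight
  rw [hQoff i j hji, hQtoff i j hji, sub_self, Real.exp_zero]
  linarith

/-- The Lagrangian `L_{Q̃}(π, Qπ)` is bounded by the score-entropy error: with
`Q_{ji} = A_{ij}·s_{ij}` and `Q̃_{ji} = A_{ij}·t_{ij}` off the diagonal (zero column sums),
for every `φ`,
`Σ_{i,j} π(i) Q_{ji} φ(j) − Σ_{i,j} π(i) Q̃_{ji} e^{φ(j)−φ(i)}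
  ≤ Σ_{i≠j} π(i) A_{ij} s_{ij} K(t_{ij}/s_{ij})`, where `K(a) = a − 1 − log a`. -/
theorem stmt_8 {X : Type*} [Fintype X] [Nonempty X] [DecidableEq X]
    (A s t : X → X → ℝ)
    (hA : ∀ i j : X, i ≠ j → 0 ≤ A i j)
    (hs : ∀ i j : X, i ≠ j → 0 < s i j)
    (ht : ∀ i j : X, i ≠ j → 0 < t i j)
    (Q Qt : X → X → ℝ)
    (hQoff : ∀ i j : X, j ≠ i → Q j i = A i j * s i j)
    (hQtoff : ∀ i j : X, j ≠ i → Qt j i = A i j * t i j)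
    (hQcol : ∀ i : X, ∑ j, Q j i = 0)
    (hQtcol : ∀ i : X, ∑ j, Qt j i = 0)
    (π : X → ℝ) (hπpos : ∀ x, 0 < π x) (hπsum : ∑ x, π x = 1)
    (φ : X → ℝ) :
    (∑ i, ∑ j, π i * Q j i * φ j) -
        (∑ i, ∑ j, π i * Qt j i * Real.exp (φ j - φ i)) ≤
      ∑ i, ∑ j ∈ Finset.univ.erase i,
        π i * A i j * s i j * (t i j / s i j - 1 - Real.log (t i j / s i j)) :=
  stmt_8_general A s t hA hs ht Q Qt hQoff hQtoff hQcol hQtcol π hπpos φ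
end

section
/- Let 𝒳 be a nonempty finite set, Q a rate matrix on 𝒳, and μ, π positive probability mass functions on 𝒳. Then FI_Q(μ‖π) ≥ 0. Moreover, if Q_{ji} > 0 for all j ≠ i, then FI_Q(μ‖π) = 0 if and only if μ = π. -/
open Finset

/-!
Each summand of `FI_Q(μ‖π)` is `π(i) Q_{ji}` times `b - a - a log (b / a)` with `a = f(i)`,
`b = f(j)`, and `log t ≤ t - 1` (strict for `t ≠ 1`) makes this factor nonnegative, vanishing
only when `a = b`. The diagonal terms vanish, so only the nonnegative off-diagonal rates
matter. If all off-diagonal rates are positive, `FI_Q(μ‖π) = 0` forces `f` to be constant,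
and a constant density ratio between two probability vectors is `1`.
-/

lemma sub_sub_mul_log_div_nonneg {a b : ℝ} (ha : 0 < a) (hb : 0 < b) :
    0 ≤ b - a - a * Real.log (b / a) := by
  have hlog := mul_le_mul_of_nonneg_left (Real.log_le_sub_one_of_pos (div_pos hb ha)) ha.le
  rw [mul_sub, mul_div_cancel₀ b ha.ne', mul_one] at hlog
  linarith

lemma sub_sub_mul_log_div_eq_zero_iff {a b : ℝ} (ha : 0 < a) (hb : 0 < b) :
    b - a - a * Real.log (b / a) = 0 ↔ a = b := by
  refine ⟨fun h => ?_, fun h => by simp [h, hb.ne']⟩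
  by_contra hne
  have hratio : b / a ≠ 1 := fun h1 => hne ((div_eq_one_iff_eq ha.ne').mp h1).symm
  have hlog := mul_lt_mul_of_pos_left (Real.log_lt_sub_one_of_pos (div_pos hb ha) hratio) ha
  rw [mul_sub, mul_div_cancel₀ b ha.ne', mul_one] at hlog
  linarith

section relFI

variable {X : Type*} {Q : X → X → ℝ} {μ π : X → ℝ}

lemma relFI_summand_nonneg (hQ : ∀ i j : X, j ≠ i → 0 ≤ Q j i)
    (hμ : ∀ x, 0 < μ x) (hπ : ∀ x, 0 < π x) (i j : X) :
    0 ≤ π i * Q j i *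
      (μ j / π j - μ i / π i - μ i / π i * Real.log ((μ j / π j) / (μ i / π i))) := by
  have hf : ∀ x, 0 < μ x / π x := fun x => div_pos (hμ x) (hπ x)
  rcases eq_or_ne j i with rfl | hji
  · rw [(sub_sub_mul_log_div_eq_zero_iff (hf j) (hf j)).mpr rfl, mul_zero]
  · exact mul_nonneg (mul_nonneg (hπ i).le (hQ i j hji))
      (sub_sub_mul_log_div_nonneg (hf i) (hf j))

lemma relFI_nonneg [Fintype X] (hQ : ∀ i j : X, j ≠ i → 0 ≤ Q j i)
    (hμ : ∀ x, 0 < μ x) (hπ : ∀ x, 0 < π x) : 0 ≤ relFI Q μ π :=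
  sum_nonneg fun i _ => sum_nonneg fun j _ => relFI_summand_nonneg hQ hμ hπ i j

lemma div_eq_div_of_relFI_eq_zero [Fintype X] (hQ : ∀ i j : X, j ≠ i → 0 < Q j i)
    (hμ : ∀ x, 0 < μ x) (hπ : ∀ x, 0 < π x) (h : relFI Q μ π = 0) (i j : X) :
    μ i / π i = μ j / π j := by
  have hQ' : ∀ i j : X, j ≠ i → 0 ≤ Q j i := fun i j hji => (hQ i j hji).le
  rcases eq_or_ne j i with rfl | hji
  · rfl
  have hrow := (sum_eq_zero_iff_of_nonneg fun i _ =>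
    sum_nonneg fun j _ => relFI_summand_nonneg hQ' hμ hπ i j).mp h i (mem_univ i)
  have hterm := (sum_eq_zero_iff_of_nonneg fun j _ =>
    relFI_summand_nonneg hQ' hμ hπ i j).mp hrow j (mem_univ j)
  rw [mul_eq_zero, or_iff_right (mul_pos (hπ i) (hQ i j hji)).ne'] at hterm
  exact (sub_sub_mul_log_div_eq_zero_iff (div_pos (hμ i) (hπ i)) (div_pos (hμ j) (hπ j))).mp hterm

lemma relFI_self [Fintype X] (hπ : ∀ x, π x ≠ 0) : relFI Q π π = 0 := by
  simp [relFI, div_self, hπ]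

end relFI

lemma eq_of_div_eq_div_of_sum_eq {X : Type*} [Fintype X] {μ π : X → ℝ} (hπ : ∀ x, π x ≠ 0)
    (hsum : ∑ x, μ x = ∑ x, π x) (hπsum : ∑ x, π x ≠ 0)
    (h : ∀ i j, μ i / π i = μ j / π j) : μ = π := by
  funext x
  have hscale : ∑ y, μ y = μ x / π x * ∑ y, π y := by
    rw [mul_sum]
    exact sum_congr rfl fun y _ => by rw [h x y, div_mul_cancel₀ _ (hπ y)]
  rw [hsum] at hscale
  have hratio : μ x / π x = 1 := by
    field_simp at hscale
    linear_combination -hscale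
  exact (div_eq_one_iff_eq (hπ x)).mp hratio

theorem stmt_9_general {X : Type*} [Fintype X]
    (Q : X → X → ℝ) (hQ : IsRateMatrix Q)
    (μ π : X → ℝ)
    (hμpos : ∀ x, 0 < μ x) (hπpos : ∀ x, 0 < π x)
    (hμsum : ∑ x, μ x = 1) (hπsum : ∑ x, π x = 1) :
    0 ≤ relFI Q μ π ∧
      ((∀ i j : X, j ≠ i → 0 < Q j i) → (relFI Q μ π = 0 ↔ μ = π)) := by
  have hπne : ∀ x, π x ≠ 0 := fun x => (hπpos x).ne'
  refine ⟨relFI_nonneg hQ.1 hμpos hπpos, fun hQpos => ⟨fun h => ?_, ?_⟩⟩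
  · exact eq_of_div_eq_div_of_sum_eq hπne (hμsum.trans hπsum.symm) (hπsum ▸ one_ne_zero)
      (div_eq_div_of_relFI_eq_zero hQpos hμpos hπpos h)
  · rintro rfl
    exact relFI_self hπne

/-- Nonnegativity of the relative Fisher information, and its vanishing characterizes
equality of the two distributions when the rate matrix is strongly irreducible. -/
theorem stmt_9 {X : Type*} [Fintype X] [Nonempty X]
    (Q : X → X → ℝ) (hQ : IsRateMatrix Q)
    (μ π : X → ℝ)
    (hμpos : ∀ x, 0 < μ x) (hπpos : ∀ x, 0 < π x)
    (hμsum : ∑ x, μ x = 1) (hπsum : ∑ x, π x = 1) :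
    0 ≤ relFI Q μ π ∧
      ((∀ i j : X, j ≠ i → 0 < Q j i) → (relFI Q μ π = 0 ↔ μ = π)) :=
  stmt_9_general Q hQ μ π hμpos hπpos hμsum hπsum
end

section
/- Let N ≥ 2 and D ≥ 1 be integers, let 𝒮 := (Fin N)^D with Hamming distance d, and let f, g : 𝒮 → ℝ. For η > 0 define w(η) := log((1 + (N−1)e^{−η})/((N−1)(1 − e^{−η}))) and the augmented split-Gibbs distribution π_η(x, z) := exp(−f(z) − g(x) − d(x,z)·w(η)) / Z(η), where Z(η) := Σ_{x,z∈𝒮} exp(−f(z) − g(x) − d(x,z)·w(η)). Then as η → 0⁺ both marginals of π_η converge to the posterior distribution: for every x₀ ∈ 𝒮, lim_{η→0⁺} Σ_{z∈𝒮} π_η(x₀, z) = e^{−f(x₀)−g(x₀)} / Σ_{x∈𝒮} e^{−f(x)−g(x)}, and for every z₀ ∈ 𝒮, lim_{η→0⁺} Σ_{x∈𝒮} π_η(x, z₀) = e^{−f(z₀)−g(z₀)} / Σ_{x∈𝒮} e^{−f(x)−g(x)}. -/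
/-!
As `η → 0⁺` the coupling weight `w(η)` tends to `+∞`, so every term of `Z(η)` with `x ≠ z` is
killed by the factor `exp (-d(x,z) w(η))`, while the diagonal terms do not depend on `η`.
Hence each row and each column sum of the unnormalised density tends to its diagonal entry
`exp (-f x - g x)`, `Z(η)` tends to the posterior normaliser, and the marginals converge.
-/

open Filter Topology Finset

theorem tendsto_log_div_one_sub_exp_neg_atTop {c : ℝ} (hc : 0 < c) :
    Tendsto (fun η => Real.log ((1 + c * Real.exp (-η)) / (c * (1 - Real.exp (-η)))))
      (𝓝[>] 0) atTop := by
  have hnum : Tendsto (fun η => 1 + c * Real.exp (-η)) (𝓝[>] 0) (𝓝 (1 + c)) :=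
    ((by fun_prop : Continuous fun η => 1 + c * Real.exp (-η)).tendsto' 0 _
      (by simp)).mono_left nhdsWithin_le_nhds
  have hden : Tendsto (fun η => c * (1 - Real.exp (-η))) (𝓝[>] 0) (𝓝[>] 0) := by
    refine tendsto_nhdsWithin_iff.mpr ⟨?_, ?_⟩
    · exact ((by fun_prop : Continuous fun η => c * (1 - Real.exp (-η))).tendsto' 0 _
        (by simp)).mono_left nhdsWithin_le_nhds
    · filter_upwards [self_mem_nhdsWithin] with η (hη : 0 < η)
      have : Real.exp (-η) < 1 := Real.exp_lt_one_iff.mpr (neg_neg_of_pos hη)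
      exact mul_pos hc (sub_pos.mpr this)
  have hratio := hnum.pos_mul_atTop (by linarith) (tendsto_inv_nhdsGT_zero.comp hden)
  exact Real.tendsto_log_atTop.comp (hratio.congr fun η => (div_eq_mul_inv _ _).symm)

section Hamming

variable {γ ι : Type*} [Fintype ι] {β : ι → Type*} [∀ i, DecidableEq (β i)]
  {l : Filter γ} {w : γ → ℝ}

theorem tendsto_exp_sub_hammingDist_mul (hw : Tendsto w l atTop) (a : ℝ) (x z : ∀ i, β i) :
    Tendsto (fun t => Real.exp (a - hammingDist x z * w t)) l
      (𝓝 (if x = z then Real.exp a else 0)) := by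
  split_ifs with hxz
  · simpa only [hxz, hammingDist_self, Nat.cast_zero, zero_mul, sub_zero] using
      tendsto_const_nhds
  · have hd : (0 : ℝ) < hammingDist x z := by exact_mod_cast hammingDist_pos.mpr hxz
    have hexp : Tendsto (fun t => a - hammingDist x z * w t) l atBot :=
      (tendsto_atBot_add_const_left l a (tendsto_neg_atTop_atBot.comp
        (hw.const_mul_atTop hd))).congr fun _ => (sub_eq_add_neg _ _).symm
    exact Real.tendsto_exp_atBot.comp hexp

theorem tendsto_sum_exp_sub_hammingDist_mul [Fintype (∀ i, β i)] (hw : Tendsto w l atTop)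
    (φ : (∀ i, β i) → ℝ) (x : ∀ i, β i) :
    Tendsto (fun t => ∑ z, Real.exp (φ z - hammingDist x z * w t)) l (𝓝 (Real.exp (φ x))) := by
  simpa only [sum_ite_eq, mem_univ, if_true] using
    tendsto_finsetSum univ fun z _ => tendsto_exp_sub_hammingDist_mul hw (φ z) x z

end Hamming

theorem stmt_10_general (N D : ℕ) (hN : 2 ≤ N)
    (f g : (Fin D → Fin N) → ℝ)
    (w : ℝ → ℝ)
    (hw : ∀ η, w η = Real.log
      ((1 + ((N : ℝ) - 1) * Real.exp (-η)) / (((N : ℝ) - 1) * (1 - Real.exp (-η)))))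
    (Z : ℝ → ℝ)
    (hZ : ∀ η, Z η = ∑ x : Fin D → Fin N, ∑ z : Fin D → Fin N,
      Real.exp (-f z - g x - (hammingDist x z : ℝ) * w η))
    (π : ℝ → (Fin D → Fin N) → (Fin D → Fin N) → ℝ)
    (hπ : ∀ η x z,
      π η x z = Real.exp (-f z - g x - (hammingDist x z : ℝ) * w η) / Z η) :
    (∀ x0 : Fin D → Fin N,
      Filter.Tendsto (fun η : ℝ => ∑ z : Fin D → Fin N, π η x0 z)
        (nhdsWithin 0 (Set.Ioi 0))
        (nhds (Real.exp (-f x0 - g x0) /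
          ∑ x : Fin D → Fin N, Real.exp (-f x - g x)))) ∧
    (∀ z0 : Fin D → Fin N,
      Filter.Tendsto (fun η : ℝ => ∑ x : Fin D → Fin N, π η x z0)
        (nhdsWithin 0 (Set.Ioi 0))
        (nhds (Real.exp (-f z0 - g z0) /
          ∑ x : Fin D → Fin N, Real.exp (-f x - g x)))) := by
  have hN1 : (0 : ℝ) < N - 1 := by
    have : (2 : ℝ) ≤ N := by exact_mod_cast hN
    linarith
  have hw_top : Tendsto w (𝓝[>] 0) atTop := by
    simpa only [← hw] using tendsto_log_div_one_sub_exp_neg_atTop hN1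
  have hrow x0 := tendsto_sum_exp_sub_hammingDist_mul hw_top (fun z => -f z - g x0) x0
  have hcol z0 := tendsto_sum_exp_sub_hammingDist_mul hw_top (fun x => -f z0 - g x) z0
  have hZ_lim : Tendsto Z (𝓝[>] 0) (𝓝 (∑ x, Real.exp (-f x - g x))) := by
    simpa only [← hZ] using tendsto_finsetSum univ fun x _ => hrow x
  have hZ_ne (x0 : Fin D → Fin N) : ∑ x, Real.exp (-f x - g x) ≠ 0 :=
    (sum_pos (fun x _ => Real.exp_pos _) ⟨x0, mem_univ x0⟩).ne'
  refine ⟨fun x0 => ?_, fun z0 => ?_⟩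
  · exact ((hrow x0).div hZ_lim (hZ_ne x0)).congr fun η => by simp only [Pi.div_apply, hπ, sum_div]
  · refine ((hcol z0).div hZ_lim (hZ_ne z0)).congr fun η => ?_
    simp only [Pi.div_apply, hπ, sum_div, hammingDist_comm z0]

/-- Convergence of both marginals of the augmented split-Gibbs distribution
`π_η(x,z) ∝ exp(−f(z) − g(x) − d(x,z)·w(η))` to the posterior
`x ↦ e^{−f(x)−g(x)} / Σ_{x'} e^{−f(x')−g(x')}` as `η → 0⁺`. -/
theorem stmt_10 (N D : ℕ) (hN : 2 ≤ N) (hD : 1 ≤ D)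
    (f g : (Fin D → Fin N) → ℝ)
    (w : ℝ → ℝ)
    (hw : ∀ η, w η = Real.log
      ((1 + ((N : ℝ) - 1) * Real.exp (-η)) / (((N : ℝ) - 1) * (1 - Real.exp (-η)))))
    (Z : ℝ → ℝ)
    (hZ : ∀ η, Z η = ∑ x : Fin D → Fin N, ∑ z : Fin D → Fin N,
      Real.exp (-f z - g x - (hammingDist x z : ℝ) * w η))
    (π : ℝ → (Fin D → Fin N) → (Fin D → Fin N) → ℝ)
    (hπ : ∀ η x z,
      π η x z = Real.exp (-f z - g x - (hammingDist x z : ℝ) * w η) / Z η) :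
    (∀ x0 : Fin D → Fin N,
      Filter.Tendsto (fun η : ℝ => ∑ z : Fin D → Fin N, π η x0 z)
        (nhdsWithin 0 (Set.Ioi 0))
        (nhds (Real.exp (-f x0 - g x0) /
          ∑ x : Fin D → Fin N, Real.exp (-f x - g x)))) ∧
    (∀ z0 : Fin D → Fin N,
      Filter.Tendsto (fun η : ℝ => ∑ x : Fin D → Fin N, π η x z0)
        (nhdsWithin 0 (Set.Ioi 0))
        (nhds (Real.exp (-f z0 - g z0) /
          ∑ x : Fin D → Fin N, Real.exp (-f x - g x)))) :=
  stmt_10_general N D hN f g w hw Z hZ π hπ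
end

section
/- Let 𝒳 be a nonempty finite set, T ∈ ℝ, and Q^fw : ℝ → (𝒳 × 𝒳 → ℝ) a family of matrices with zero column sums, i.e. Σ_{j∈𝒳} Q^fw_t(j, i) = 0 for all i and t. Let p : ℝ → (𝒳 → ℝ) be a family of positive functions satisfying, componentwise, ∂_t p_t(j) = Σ_{i∈𝒳} Q^fw_t(j, i) p_t(i) for all t. For each t define the reverse matrix Q_t by Q_t(i, j) := (p_{T−t}(i)/p_{T−t}(j))·Q^fw_{T−t}(j, i) for i ≠ j, and Q_t(i, i) := −Σ_{j≠i} Q_t(j, i). Then the time-reversed family q_t := p_{T−t} satisfies, componentwise, ∂_t q_t(i) = Σ_{j∈𝒳} Q_t(i, j) q_t(j) for all t; that is, the reverse continuous-time Markov chain with generator Q_t reproduces the forward marginals run backwards in time. -/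
/-!
Off the diagonal the reversed rates satisfy `Q i j * p j = Qfw j i * p i`: they carry the
forward probability flux backwards. Summing, the zero column sums of `Qfw` make
`∑ j, Q i j * p j = -∑ j, Qfw i j * p j`, and the sign is the one the chain rule produces
for `s ↦ p (T - s)`.
-/

open Finset

section TimeReversal

variable {X : Type*} (A R : X → X → ℝ) (p : X → ℝ)

lemma reversedRate_mul_eq_of_ne (hp : ∀ x, p x ≠ 0)
    (hoff : ∀ i j, i ≠ j → R i j = p i / p j * A j i) {i j : X} (hij : i ≠ j) :
    R i j * p j = A j i * p i := by
  rw [hoff i j hij]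
  field_simp [hp j]

variable [Fintype X] [DecidableEq X]

lemma sum_reversedRate_mul_eq_neg (hp : ∀ x, p x ≠ 0) (hA : ∀ i, ∑ j, A j i = 0)
    (hoff : ∀ i j, i ≠ j → R i j = p i / p j * A j i)
    (hdiag : ∀ i, R i i = -∑ j ∈ univ.erase i, R j i) (i : X) :
    ∑ j, R i j * p j = -∑ j, A i j * p j := by
  have hout : ∑ j ∈ univ.erase i, R i j * p j = -(A i i * p i) := by
    have hcol := hA i
    rw [← add_sum_erase _ _ (mem_univ i)] at hcol
    rw [sum_congr rfl fun j hj => reversedRate_mul_eq_of_ne A R p hp hoff (ne_of_mem_erase hj).symm,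
      ← sum_mul]
    linear_combination p i * hcol
  have hin : R i i * p i = -∑ j ∈ univ.erase i, A i j * p j := by
    rw [hdiag, neg_mul, sum_mul,
      sum_congr rfl fun j hj => reversedRate_mul_eq_of_ne A R p hp hoff (ne_of_mem_erase hj)]
  rw [← add_sum_erase _ _ (mem_univ i), ← add_sum_erase _ _ (mem_univ i), hout, hin]
  ring

end TimeReversal

theorem stmt_14_general {X : Type*} [Fintype X] [DecidableEq X] (T : ℝ)
    (Qfw : ℝ → X → X → ℝ)
    (hQfw : ∀ t i, ∑ j, Qfw t j i = 0)
    (p : ℝ → X → ℝ) (hp : ∀ t x, 0 < p t x)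
    (hdp : ∀ t (j : X), HasDerivAt (fun s => p s j) (∑ i, Qfw t j i * p t i) t)
    (Q : ℝ → X → X → ℝ)
    (hQoff : ∀ t (i j : X), i ≠ j →
      Q t i j = p (T - t) i / p (T - t) j * Qfw (T - t) j i)
    (hQdiag : ∀ t (i : X), Q t i i = -∑ j ∈ Finset.univ.erase i, Q t j i) :
    ∀ t (i : X),
      HasDerivAt (fun s => p (T - s) i) (∑ j, Q t i j * p (T - t) j) t := by
  intro t i
  have hchain : HasDerivAt (fun s => p (T - s) i)
      ((∑ j, Qfw (T - t) i j * p (T - t) j) * (-1)) t :=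
    (hdp (T - t) i).comp t ((hasDerivAt_id t).const_sub T)
  rwa [sum_reversedRate_mul_eq_neg (Qfw (T - t)) (Q t) (p (T - t)) (fun x => (hp _ x).ne')
    (hQfw _) (hQoff t) (hQdiag t), ← mul_neg_one]

/-- Time reversal of a continuous-time Markov chain: if `∂_t p_t = Q^fw_t p_t` with
zero-column-sum matrices `Q^fw_t`, and `Q_t(i,j) := (p_{T−t}(i)/p_{T−t}(j))·Q^fw_{T−t}(j,i)`
for `i ≠ j` with diagonal `Q_t(i,i) := −Σ_{j≠i} Q_t(j,i)`, then the time-reversed family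
`q_t := p_{T−t}` satisfies `∂_t q_t(i) = Σ_j Q_t(i,j) q_t(j)`. -/
theorem stmt_14 {X : Type*} [Fintype X] [Nonempty X] [DecidableEq X] (T : ℝ)
    (Qfw : ℝ → X → X → ℝ)
    (hQfw : ∀ t i, ∑ j, Qfw t j i = 0)
    (p : ℝ → X → ℝ) (hp : ∀ t x, 0 < p t x)
    (hdp : ∀ t (j : X), HasDerivAt (fun s => p s j) (∑ i, Qfw t j i * p t i) t)
    (Q : ℝ → X → X → ℝ)
    (hQoff : ∀ t (i j : X), i ≠ j →
      Q t i j = p (T - t) i / p (T - t) j * Qfw (T - t) j i)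
    (hQdiag : ∀ t (i : X), Q t i i = -∑ j ∈ Finset.univ.erase i, Q t j i) :
    ∀ t (i : X),
      HasDerivAt (fun s => p (T - s) i) (∑ j, Q t i j * p (T - t) j) t :=
  stmt_14_general T Qfw hQfw p hp hdp Q hQoff hQdiag
end

section
/- Let n ≥ 1 be an integer, ε > 0, and Q an n×n real matrix with zero column sums (Σ_j Q_{ji} = 0 for every i) and off-diagonal entries Q_{ji} ≥ ε for all j ≠ i. Then every complex eigenvalue λ of Q (viewing Q as a complex matrix) with λ ≠ 0 satisfies Re λ ≤ −n·ε; equivalently, the spectral gap γ(Q) := min_{λ ≠ 0} (−Re λ) over nonzero eigenvalues satisfies γ(Q) ≥ n·ε. -/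
/-!
If `Q v = λ v` with `λ ≠ 0`, the zero column sums force `∑ vᵢ = 0`. On that hyperplane the matrix
`n • 1 - J` (`J` the all-ones matrix) acts as multiplication by `n`, so `v` is an eigenvector of
`M = Q + ε (n • 1 - J)` with eigenvalue `λ + nε`. The matrix `M` still has zero column sums and
now has nonnegative off-diagonal entries, so the Gershgorin discs of `Mᵀ` (which has the same
eigenvalues) lie in the half-plane `Re z ≤ 0`.
-/
open Finset Matrix

namespace Matrix

open Module.End

variable {ι : Type*} [Fintype ι]

theorem sum_eq_zero_of_mulVec_eq_smul {K : Type*} [Field K] {A : Matrix ι ι K}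
    (hcol : ∀ i, ∑ j, A j i = 0) {v : ι → K} {μ : K} (hμ : μ ≠ 0) (hv : A *ᵥ v = μ • v) :
    ∑ i, v i = 0 := by
  have hA : 1 ᵥ* A = 0 := funext fun i => by simpa [vecMul, dotProduct] using hcol i
  have h : μ * ∑ i, v i = 0 := by
    simpa [hv, hA, dotProduct, Finset.mul_sum] using dotProduct_mulVec 1 A v
  exact (mul_eq_zero.mp h).resolve_left hμ

theorem ones_mulVec {R : Type*} [CommRing R] (v : ι → R) :
    (of fun _ _ => 1 : Matrix ι ι R) *ᵥ v = fun _ => ∑ i, v i := by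
  ext; simp [mulVec, dotProduct]

variable [DecidableEq ι]

theorem card_smul_one_sub_ones_mulVec {R : Type*} [CommRing R] {v : ι → R}
    (hv : ∑ i, v i = 0) :
    ((Fintype.card ι : R) • 1 - of fun _ _ => 1 : Matrix ι ι R) *ᵥ v =
      (Fintype.card ι : R) • v := by
  rw [sub_mulVec, smul_mulVec, one_mulVec, ones_mulVec, hv]
  exact sub_zero _

theorem hasEigenvalue_toLin'_transpose_iff {R : Type*} [CommRing R] [IsDomain R]
    (A : Matrix ι ι R) (μ : R) :
    HasEigenvalue (toLin' Aᵀ) μ ↔ HasEigenvalue (toLin' A) μ := by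
  rw [hasEigenvalue_iff_isRoot_charpoly, hasEigenvalue_iff_isRoot_charpoly, charpoly_toLin',
    charpoly_toLin', charpoly_transpose]

theorem re_le_zero_of_mulVec_eq_smul {A : Matrix ι ι ℝ} (hcol : ∀ i, ∑ j, A j i = 0)
    (hoff : ∀ i j, j ≠ i → 0 ≤ A j i) {v : ι → ℂ} {μ : ℂ} (hv0 : v ≠ 0)
    (hv : (A.map (↑)) *ᵥ v = μ • v) : μ.re ≤ 0 := by
  have hμ : HasEigenvalue (toLin' (A.map (↑) : Matrix ι ι ℂ)ᵀ) μ := by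
    rw [hasEigenvalue_toLin'_transpose_iff]
    exact hasEigenvalue_of_hasEigenvector ⟨by simpa [mem_eigenspace_iff] using hv, hv0⟩
  obtain ⟨k, hk⟩ := eigenvalue_mem_ball hμ
  have hradius : ∑ j ∈ univ.erase k, ‖(A.map (↑) : Matrix ι ι ℂ)ᵀ k j‖ = -A k k := by
    calc ∑ j ∈ univ.erase k, ‖(A.map (↑) : Matrix ι ι ℂ)ᵀ k j‖
        = ∑ j ∈ univ.erase k, A j k := Finset.sum_congr rfl fun j hj => by
          simp [abs_of_nonneg (hoff k j (ne_of_mem_erase hj))]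
      _ = -A k k := by rw [sum_erase_eq_sub (mem_univ k), hcol k, zero_sub]
  rw [Metric.mem_closedBall, hradius, Complex.dist_eq] at hk
  have := Complex.re_le_norm (μ - A k k)
  simp only [transpose_apply, map_apply, Complex.sub_re, Complex.ofReal_re] at hk this ⊢
  linarith

end Matrix

theorem stmt_15_general (n : ℕ) (ε : ℝ)
    (Q : Matrix (Fin n) (Fin n) ℝ)
    (hcol : ∀ i, ∑ j, Q j i = 0)
    (hoff : ∀ i j, j ≠ i → ε ≤ Q j i)
    (lam : ℂ) (hlam : lam ≠ 0)
    (hev : ∃ v : Fin n → ℂ, v ≠ 0 ∧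
      (Q.map (Complex.ofReal ·)).mulVec v = lam • v) :
    lam.re ≤ -(n * ε) := by
  obtain ⟨v, hv0, hv⟩ := hev
  set L : Matrix (Fin n) (Fin n) ℝ := (n : ℝ) • 1 - of fun _ _ => 1
  have hsum : ∑ i, v i = 0 :=
    sum_eq_zero_of_mulVec_eq_smul (fun i => by simp [← Complex.ofReal_sum, hcol]) hlam hv
  have hMcol : ∀ i, ∑ j, (Q + ε • L) j i = 0 := fun i => by
    simp [L, one_apply, sum_add_distrib, hcol, ← Finset.mul_sum]
  have hMoff : ∀ i j, j ≠ i → 0 ≤ (Q + ε • L) j i := fun i j hji => by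
    simpa [L, one_apply, hji] using hoff i j hji
  have hMv : ((Q + ε • L).map (↑)) *ᵥ v = (lam + ((n * ε : ℝ) : ℂ)) • v := by
    have hmap : (Q + ε • L).map (↑) =
        Q.map (↑) + (ε : ℂ) • ((n : ℂ) • 1 - of fun _ _ => 1 : Matrix (Fin n) (Fin n) ℂ) := by
      ext i j; by_cases h : i = j <;> simp [L, one_apply, h]
    have hL := card_smul_one_sub_ones_mulVec hsum
    rw [Fintype.card_fin] at hL
    rw [hmap, add_mulVec, smul_mulVec, hL, hv]
    push_cast
    module
  have hre := re_le_zero_of_mulVec_eq_smul hMcol hMoff hv0 hMv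
  rw [Complex.add_re, Complex.ofReal_re] at hre
  linarith

/-- Spectral gap of a rate matrix with uniformly positive off-diagonal entries:
if `Q` has zero column sums and `Q_{ji} ≥ ε > 0` for all `j ≠ i`, then every nonzero
complex eigenvalue `λ` of `Q` satisfies `Re λ ≤ −n·ε`. -/
theorem stmt_15 (n : ℕ) (hn : 1 ≤ n) (ε : ℝ) (hε : 0 < ε)
    (Q : Matrix (Fin n) (Fin n) ℝ)
    (hcol : ∀ i, ∑ j, Q j i = 0)
    (hoff : ∀ i j, j ≠ i → ε ≤ Q j i)
    (lam : ℂ) (hlam : lam ≠ 0)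
    (hev : ∃ v : Fin n → ℂ, v ≠ 0 ∧
      (Q.map (Complex.ofReal ·)).mulVec v = lam • v) :
    lam.re ≤ -(n * ε) :=
  stmt_15_general n ε Q hcol hoff lam hlam hev
end
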